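/- arXiv:1809.08518 — 6 statements merged into one kernel-verified Lean document; each statement's English description precedes it below -/
import Mathlib

section
/- If g : [0,∞) → [0,∞) is C¹ on (0,∞) with g(0)=0 and satisfies δ₀ ≤ t·g'(t)/g(t) ≤ g₀ for all t > 0 (with 0 < δ₀ ≤ g₀), then for all s, t ≥ 0 one has min{s^{δ₀}, s^{g₀}}·g(t) ≤ g(s·t) ≤ max{s^{δ₀}, s^{g₀}}·g(t). -/
/-!
The two-sided bound `δ₀ ≤ t g'(t) / g(t) ≤ g₀` says that `(log g)'` lies between `δ₀ / t` and
`g₀ / t`, so `g(t) / t ^ δ₀` is nondecreasing and `g(t) / t ^ g₀` is nonincreasing on `(0, ∞)`.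
Comparing these quotients at `t` and `s t` gives `s ^ δ₀ g(t)` and `s ^ g₀ g(t)` as the two bounds
for `g(s t)`, in one order for `s ≥ 1` and in the other for `s ≤ 1`.
-/

open Set Real

section RpowQuotient

variable {g : ℝ → ℝ} {p : ℝ}

theorem hasDerivAt_div_rpow {u : ℝ} (hu : 0 < u) (hg : DifferentiableAt ℝ g u) :
    HasDerivAt (fun x => g x / x ^ p) (u ^ (-p - 1) * (u * deriv g u - p * g u)) u := by
  have hpow : HasDerivAt (fun x : ℝ => x ^ (-p)) (-p * u ^ (-p - 1)) u :=
    hasDerivAt_rpow_const (Or.inl hu.ne')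
  have hsplit : u ^ (-p) = u * u ^ (-p - 1) := by
    rw [mul_comm, ← rpow_add_one hu.ne', sub_add_cancel]
  refine ((hg.hasDerivAt.mul hpow).congr_of_eventuallyEq ?_).congr_deriv ?_
  · filter_upwards [Ioi_mem_nhds hu] with x hx
    rw [Pi.mul_apply, rpow_neg (le_of_lt hx), div_eq_mul_inv]
  · rw [hsplit]
    ring

theorem monotoneOn_div_rpow_of_mul_le_mul_deriv (hg : DifferentiableOn ℝ g (Ioi 0))
    (h : ∀ u, 0 < u → p * g u ≤ u * deriv g u) :
    MonotoneOn (fun u => g u / u ^ p) (Ioi 0) := by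
  have hderiv : ∀ u ∈ Ioi (0 : ℝ),
      HasDerivAt (fun x => g x / x ^ p) (u ^ (-p - 1) * (u * deriv g u - p * g u)) u :=
    fun u hu => hasDerivAt_div_rpow hu (hg.differentiableAt (Ioi_mem_nhds hu))
  refine monotoneOn_of_hasDerivWithinAt_nonneg (convex_Ioi 0)
    (fun u hu => (hderiv u hu).continuousAt.continuousWithinAt)
    (fun u hu => (hderiv u (interior_subset hu)).hasDerivWithinAt) fun u hu => ?_
  rw [interior_Ioi] at hu
  exact mul_nonneg (rpow_nonneg (le_of_lt hu) _) (sub_nonneg.mpr (h u hu))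

theorem antitoneOn_div_rpow_of_mul_deriv_le_mul (hg : DifferentiableOn ℝ g (Ioi 0))
    (h : ∀ u, 0 < u → u * deriv g u ≤ p * g u) :
    AntitoneOn (fun u => g u / u ^ p) (Ioi 0) := by
  have hneg := monotoneOn_div_rpow_of_mul_le_mul_deriv (g := -g) hg.neg fun u hu => by
    rw [deriv.neg, Pi.neg_apply]
    linarith [h u hu]
  intro a ha b hb hab
  simpa only [Pi.neg_apply, neg_div, neg_le_neg_iff] using hneg ha hb hab

end RpowQuotient

section Scaling

variable {s t p : ℝ}

theorem rpow_mul_le_iff_div_rpow_le (hs : 0 < s) (ht : 0 < t) (x y : ℝ) :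
    s ^ p * y ≤ x ↔ y / t ^ p ≤ x / (s * t) ^ p := by
  rw [mul_rpow hs.le ht.le, mul_comm (s ^ p), ← div_div,
    div_le_div_iff_of_pos_right (rpow_pos_of_pos ht p), le_div_iff₀ (rpow_pos_of_pos hs p),
    mul_comm]

theorem le_rpow_mul_iff_div_rpow_le (hs : 0 < s) (ht : 0 < t) (x y : ℝ) :
    x ≤ s ^ p * y ↔ x / (s * t) ^ p ≤ y / t ^ p := by
  rw [mul_rpow hs.le ht.le, mul_comm (s ^ p), ← div_div,
    div_le_div_iff_of_pos_right (rpow_pos_of_pos ht p), div_le_iff₀ (rpow_pos_of_pos hs p),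
    mul_comm]

end Scaling

theorem stmt_0_general (g : ℝ → ℝ) (δ₀ g₀ : ℝ)
    (hδ : 0 < δ₀)
    (hC1 : ContDiffOn ℝ 1 g (Set.Ioi 0))
    (hg0 : g 0 = 0)
    (hpos : ∀ t : ℝ, 0 < t → 0 < g t)
    (hlieb : ∀ t : ℝ, 0 < t → δ₀ ≤ t * deriv g t / g t ∧ t * deriv g t / g t ≤ g₀) :
    ∀ s t : ℝ, 0 ≤ s → 0 ≤ t →
      min (s ^ δ₀) (s ^ g₀) * g t ≤ g (s * t) ∧
      g (s * t) ≤ max (s ^ δ₀) (s ^ g₀) * g t := by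
  have hg : DifferentiableOn ℝ g (Ioi 0) := hC1.differentiableOn one_ne_zero
  have hmono := monotoneOn_div_rpow_of_mul_le_mul_deriv hg fun u hu =>
    (le_div_iff₀ (hpos u hu)).mp (hlieb u hu).1
  have hanti := antitoneOn_div_rpow_of_mul_deriv_le_mul hg fun u hu =>
    (div_le_iff₀ (hpos u hu)).mp (hlieb u hu).2
  intro s t hs ht
  rcases ht.eq_or_lt with rfl | ht
  · simp [hg0]
  rcases hs.eq_or_lt with rfl | hs
  · have h0 : (0 : ℝ) ≤ 0 ^ g₀ := rpow_nonneg le_rfl g₀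
    simp only [zero_mul, hg0, zero_rpow hδ.ne', min_eq_left h0, max_eq_right h0]
    exact ⟨le_rfl, mul_nonneg h0 (hpos t ht).le⟩
  have hst : 0 < s * t := mul_pos hs ht
  have hbounds : (s ^ δ₀ * g t ≤ g (s * t) ∧ g (s * t) ≤ s ^ g₀ * g t) ∨
      (s ^ g₀ * g t ≤ g (s * t) ∧ g (s * t) ≤ s ^ δ₀ * g t) := by
    rcases le_total 1 s with hs1 | hs1
    · have hle : t ≤ s * t := le_mul_of_one_le_left ht.le hs1
      exact .inl ⟨(rpow_mul_le_iff_div_rpow_le hs ht _ _).mpr (hmono ht hst hle),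
        (le_rpow_mul_iff_div_rpow_le hs ht _ _).mpr (hanti ht hst hle)⟩
    · have hle : s * t ≤ t := mul_le_of_le_one_left ht.le hs1
      exact .inr ⟨(rpow_mul_le_iff_div_rpow_le hs ht _ _).mpr (hanti hst ht hle),
        (le_rpow_mul_iff_div_rpow_le hs ht _ _).mpr (hmono hst ht hle)⟩
  have hgt := (hpos t ht).le
  rcases hbounds with ⟨hlow, hup⟩ | ⟨hlow, hup⟩
  · exact ⟨(mul_le_mul_of_nonneg_right (min_le_left _ _) hgt).trans hlow,
      hup.trans (mul_le_mul_of_nonneg_right (le_max_right _ _) hgt)⟩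
  · exact ⟨(mul_le_mul_of_nonneg_right (min_le_right _ _) hgt).trans hlow,
      hup.trans (mul_le_mul_of_nonneg_right (le_max_left _ _) hgt)⟩

theorem stmt_0 (g : ℝ → ℝ) (δ₀ g₀ : ℝ)
    (hδ : 0 < δ₀) (hδg : δ₀ ≤ g₀)
    (hcont : ContinuousOn g (Set.Ici 0))
    (hC1 : ContDiffOn ℝ 1 g (Set.Ioi 0))
    (hg0 : g 0 = 0)
    (hpos : ∀ t : ℝ, 0 < t → 0 < g t)
    (hlieb : ∀ t : ℝ, 0 < t → δ₀ ≤ t * deriv g t / g t ∧ t * deriv g t / g t ≤ g₀) :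
    ∀ s t : ℝ, 0 ≤ s → 0 ≤ t →
      min (s ^ δ₀) (s ^ g₀) * g t ≤ g (s * t) ∧
      g (s * t) ≤ max (s ^ δ₀) (s ^ g₀) * g t :=
  stmt_0_general g δ₀ g₀ hδ hC1 hg0 hpos hlieb
end

section
/- Under the Lieberman condition on g, the function G(t) = ∫₀ᵗ g(s) ds satisfies G(a+b) ≤ 2^{g₀}·(1+g₀)·(G(a) + G(b)) for all a, b ≥ 0. -/
/-! The upper Lieberman bound `t g'(t) ≤ g₀ g(t)` gives two growth estimates: `g₀ log t - log g(t)`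
is nondecreasing, so `g(2t) ≤ 2^g₀ g(t)`; and `(t g(t))' ≤ (1 + g₀) g(t)`, so
`t g(t) ≤ (1 + g₀) G(t)`. The lower bound `δ₀ > 0` makes `g` nondecreasing, so for `a ≤ b`
`G(a + b) - G(a) ≤ b g(a + b) ≤ b g(2b) ≤ 2^g₀ b g(b) ≤ 2^g₀ (1 + g₀) G(b)`. -/

open Real Set intervalIntegral

section

variable {g : ℝ → ℝ} {g₀ : ℝ}

lemma hasDerivAt_integral_zero_right (hcont : ContinuousOn g (Ici 0)) {t : ℝ} (ht : 0 < t) :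
    HasDerivAt (fun u => ∫ s in (0:ℝ)..u, g s) (g t) t :=
  integral_hasDerivAt_right ((hcont.mono fun _ hs => hs.1).intervalIntegrable_of_Icc ht.le)
    (hcont.mono Ioi_subset_Ici_self |>.stronglyMeasurableAtFilter isOpen_Ioi t ht)
    (hcont.continuousAt (Ici_mem_nhds ht))

lemma integral_zero_nonneg_of_pos (hpos : ∀ t, 0 < t → 0 < g t) {t : ℝ} (ht : 0 ≤ t) :
    0 ≤ ∫ s in (0:ℝ)..t, g s := by
  rw [integral_of_le ht]
  exact MeasureTheory.setIntegral_nonneg measurableSet_Ioc fun s hs => (hpos s hs.1).le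

lemma mul_le_one_add_mul_integral (hcont : ContinuousOn g (Ici 0))
    (hdiff : DifferentiableOn ℝ g (Ioi 0)) (hderiv : ∀ t, 0 < t → t * deriv g t ≤ g₀ * g t)
    {T : ℝ} (hT : 0 ≤ T) : T * g T ≤ (1 + g₀) * ∫ s in (0:ℝ)..T, g s := by
  set F : ℝ → ℝ := fun t => (1 + g₀) * (∫ s in (0:ℝ)..t, g s) - t * g t
  have hF : MonotoneOn F (Icc 0 T) := by
    have hcontIcc : ContinuousOn g (Icc 0 T) := hcont.mono Icc_subset_Ici_self
    refine monotoneOn_of_hasDerivWithinAt_nonneg (f' := fun t => (1 + g₀) * g t -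
      (1 * g t + t * deriv g t)) (convex_Icc 0 T) ?_ ?_ ?_
    · have hG := continuousOn_primitive_interval (μ := MeasureTheory.volume)
        (a := 0) (b := T) (by rw [uIcc_of_le hT]; exact hcontIcc.integrableOn_Icc)
      rw [uIcc_of_le hT] at hG
      exact (hG.const_smul (1 + g₀)).sub (continuousOn_id.mul hcontIcc)
    · rw [interior_Icc]
      intro t ht
      exact (((hasDerivAt_integral_zero_right hcont ht.1).const_mul (1 + g₀)).sub
        ((hasDerivAt_id t).mul ((hdiff t ht.1).differentiableAt
          (Ioi_mem_nhds ht.1)).hasDerivAt)).hasDerivWithinAt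
    · rw [interior_Icc]
      intro t ht
      linarith [hderiv t ht.1]
  have := hF ⟨le_rfl, hT⟩ ⟨hT, le_rfl⟩ hT
  simp only [F, integral_same, mul_zero, zero_mul, sub_zero] at this
  linarith

lemma le_div_rpow_mul (hdiff : DifferentiableOn ℝ g (Ioi 0)) (hpos : ∀ t, 0 < t → 0 < g t)
    (hderiv : ∀ t, 0 < t → t * deriv g t ≤ g₀ * g t) {s t : ℝ} (hs : 0 < s) (hst : s ≤ t) :
    g t ≤ (t / s) ^ g₀ * g s := by
  have hH : MonotoneOn (fun u => g₀ * log u - log (g u)) (Ioi 0) := by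
    have hder : ∀ u ∈ Ioi (0:ℝ), HasDerivAt (fun u => g₀ * log u - log (g u))
        (g₀ * u⁻¹ - deriv g u / g u) u := fun u hu =>
      ((hasDerivAt_log (ne_of_gt hu)).const_mul g₀).sub
        (((hdiff u hu).differentiableAt (Ioi_mem_nhds hu)).hasDerivAt.log (hpos u hu).ne')
    refine monotoneOn_of_hasDerivWithinAt_nonneg (f' := fun u => g₀ * u⁻¹ - deriv g u / g u)
      (convex_Ioi 0)
      (fun u hu => (hder u hu).continuousAt.continuousWithinAt) ?_ ?_
    · rw [interior_Ioi]
      exact fun u hu => (hder u hu).hasDerivWithinAt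
    · rw [interior_Ioi]
      intro u hu
      have hu : (0:ℝ) < u := hu
      rw [sub_nonneg, div_le_iff₀ (hpos u hu), ← div_eq_mul_inv, div_mul_eq_mul_div,
        le_div_iff₀ hu]
      linarith [hderiv u hu]
  have ht : 0 < t := hs.trans_le hst
  have hlog := hH hs ht hst
  simp only at hlog
  rw [← log_le_log_iff (hpos t ht) (by have := hpos s hs; positivity),
    log_mul (by positivity) (hpos s hs).ne', log_rpow (by positivity), log_div ht.ne' hs.ne']
  linarith

end

section

variable {g : ℝ → ℝ} {C D : ℝ}

lemma integral_add_le_of_le (hcont : ContinuousOn g (Ici 0)) (hmono : MonotoneOn g (Ici 0))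
    (hpos : ∀ t, 0 < t → 0 < g t) (hC : 0 ≤ C) (hCD : 1 ≤ C * D)
    (hdouble : ∀ t, 0 < t → g (2 * t) ≤ C * g t)
    (hmul : ∀ t, 0 ≤ t → t * g t ≤ D * ∫ s in (0:ℝ)..t, g s) {a b : ℝ} (ha : 0 ≤ a)
    (hab : a ≤ b) :
    ∫ s in (0:ℝ)..(a + b), g s ≤ C * D * ((∫ s in (0:ℝ)..a, g s) + ∫ s in (0:ℝ)..b, g s) := by
  rcases (ha.trans hab).eq_or_lt with rfl | hb
  · obtain rfl : a = 0 := le_antisymm hab ha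
    simp
  have hint : ∀ x y : ℝ, 0 ≤ x → x ≤ y → IntervalIntegrable g MeasureTheory.volume x y :=
    fun x y hx hxy => (hcont.mono fun _ hs => hx.trans hs.1).intervalIntegrable_of_Icc hxy
  have htail : ∫ s in a..(a + b), g s ≤ b * g (a + b) := by
    have := integral_mono_on (by linarith) (hint a (a + b) ha (by linarith))
      intervalIntegrable_const fun s hs =>
        hmono (ha.trans hs.1) (show 0 ≤ a + b by linarith) hs.2
    simpa using this
  have hgab : g (a + b) ≤ C * g b :=
    (hmono (show 0 ≤ a + b by linarith) (show 0 ≤ 2 * b by linarith) (by linarith)).trans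
      (hdouble b hb)
  have hGa := integral_zero_nonneg_of_pos hpos ha
  calc ∫ s in (0:ℝ)..(a + b), g s
      = (∫ s in (0:ℝ)..a, g s) + ∫ s in a..(a + b), g s :=
        (integral_add_adjacent_intervals (hint 0 a le_rfl ha)
          (hint a (a + b) ha (by linarith))).symm
    _ ≤ (∫ s in (0:ℝ)..a, g s) + C * (b * g b) := by
        linarith [mul_le_mul_of_nonneg_left hgab hb.le]
    _ ≤ (∫ s in (0:ℝ)..a, g s) + C * (D * ∫ s in (0:ℝ)..b, g s) := by
        gcongr _ + C * ?_; exact hmul b hb.le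
    _ ≤ C * D * ((∫ s in (0:ℝ)..a, g s) + ∫ s in (0:ℝ)..b, g s) := by
        linarith [mul_le_mul_of_nonneg_right hCD hGa]

lemma integral_add_le (hcont : ContinuousOn g (Ici 0)) (hmono : MonotoneOn g (Ici 0))
    (hpos : ∀ t, 0 < t → 0 < g t) (hC : 0 ≤ C) (hCD : 1 ≤ C * D)
    (hdouble : ∀ t, 0 < t → g (2 * t) ≤ C * g t)
    (hmul : ∀ t, 0 ≤ t → t * g t ≤ D * ∫ s in (0:ℝ)..t, g s) {a b : ℝ} (ha : 0 ≤ a)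
    (hb : 0 ≤ b) :
    ∫ s in (0:ℝ)..(a + b), g s ≤ C * D * ((∫ s in (0:ℝ)..a, g s) + ∫ s in (0:ℝ)..b, g s) := by
  rcases le_total a b with hab | hba
  · exact integral_add_le_of_le hcont hmono hpos hC hCD hdouble hmul ha hab
  · rw [add_comm a b, add_comm (∫ s in (0:ℝ)..a, g s)]
    exact integral_add_le_of_le hcont hmono hpos hC hCD hdouble hmul hb hba

end

theorem stmt_3_general (g G : ℝ → ℝ) (δ₀ g₀ : ℝ)
    (hδ : 0 < δ₀) (hδg : δ₀ ≤ g₀)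
    (hcont : ContinuousOn g (Set.Ici 0))
    (hC1 : ContDiffOn ℝ 1 g (Set.Ioi 0))
    (hpos : ∀ t : ℝ, 0 < t → 0 < g t)
    (hlieb : ∀ t : ℝ, 0 < t → δ₀ ≤ t * deriv g t / g t ∧ t * deriv g t / g t ≤ g₀)
    (hG : ∀ t : ℝ, G t = ∫ s in (0:ℝ)..t, g s) :
    ∀ a b : ℝ, 0 ≤ a → 0 ≤ b →
      G (a + b) ≤ (2:ℝ) ^ g₀ * (1 + g₀) * (G a + G b) := by
  intro a b ha hb
  have hg₀ : 0 ≤ g₀ := hδ.le.trans hδg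
  have hdiff : DifferentiableOn ℝ g (Ioi 0) := hC1.differentiableOn one_ne_zero
  have hderiv_pos : ∀ t, 0 < t → 0 < deriv g t := fun t ht =>
    pos_of_mul_pos_right (div_pos_iff_of_pos_right (hpos t ht) |>.mp (hδ.trans_le (hlieb t ht).1))
      ht.le
  have hderiv_le : ∀ t, 0 < t → t * deriv g t ≤ g₀ * g t := fun t ht =>
    (div_le_iff₀ (hpos t ht)).mp (hlieb t ht).2
  have hmono : MonotoneOn g (Ici 0) :=
    monotoneOn_of_deriv_nonneg (convex_Ici 0) hcont (by simpa using hdiff)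
      (by simpa using fun t ht => (hderiv_pos t ht).le)
  have hdouble : ∀ t, 0 < t → g (2 * t) ≤ 2 ^ g₀ * g t := fun t ht => by
    simpa [ht.ne'] using le_div_rpow_mul hdiff hpos hderiv_le ht (by linarith : t ≤ 2 * t)
  simp only [hG]
  exact integral_add_le hcont hmono hpos (by positivity)
    (one_le_mul_of_one_le_of_one_le (one_le_rpow (by norm_num) hg₀) (by linarith)) hdouble
    (fun t ht => mul_le_one_add_mul_integral hcont hdiff hderiv_le ht) ha hb

theorem stmt_3 (g G : ℝ → ℝ) (δ₀ g₀ : ℝ)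
    (hδ : 0 < δ₀) (hδg : δ₀ ≤ g₀)
    (hcont : ContinuousOn g (Set.Ici 0))
    (hC1 : ContDiffOn ℝ 1 g (Set.Ioi 0))
    (hg0 : g 0 = 0)
    (hpos : ∀ t : ℝ, 0 < t → 0 < g t)
    (hlieb : ∀ t : ℝ, 0 < t → δ₀ ≤ t * deriv g t / g t ∧ t * deriv g t / g t ≤ g₀)
    (hG : ∀ t : ℝ, G t = ∫ s in (0:ℝ)..t, g s) :
    ∀ a b : ℝ, 0 ≤ a → 0 ≤ b →
      G (a + b) ≤ (2:ℝ) ^ g₀ * (1 + g₀) * (G a + G b) :=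
  stmt_3_general g G δ₀ g₀ hδ hδg hcont hC1 hpos hlieb hG
end

section
/- Suppose g satisfies the Lieberman condition with lower exponent δ₀ and F satisfies 1+θ₀ ≤ t·F'(t)/F(t) ≤ 1+f₀ with f₀ < δ₀. Then lim_{t→∞} f(t)/g(t) = 0 and lim_{t→∞} F(t)/G(t) = 0, where f = F' and G(t) = ∫₀ᵗ g. -/
/-!
The lower Lieberman bound `δ₀ g ≤ t g'` makes `g t * t ^ (-δ₀)` nondecreasing, and the upper bound
`t F' ≤ (1 + f₀) F` makes `F t * t ^ (-(1 + f₀))` nonincreasing. Hence, for `t ≥ 1`,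
`g t ≳ t ^ δ₀`, `G t ≳ t ^ (δ₀ + 1)`, `F t ≲ t ^ (1 + f₀)` and `f t ≤ (1 + f₀) F t / t ≲ t ^ f₀`,
so both `f / g` and `F / G` are `O(t ^ (f₀ - δ₀))`, which tends to `0` because `f₀ < δ₀`.
-/

open Filter Real Set Topology

section PowerComparison

variable {φ : ℝ → ℝ} {a c : ℝ}

theorem monotoneOn_mul_rpow_neg_of_mul_le_mul_deriv (ha : 0 < a)
    (hcont : ContinuousOn φ (Ici a)) (hdiff : ∀ t ∈ Ioi a, DifferentiableAt ℝ φ t)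
    (hle : ∀ t ∈ Ioi a, c * φ t ≤ t * deriv φ t) :
    MonotoneOn (fun t => φ t * t ^ (-c)) (Ici a) := by
  have hpow : ∀ t ∈ Ioi a, HasDerivAt (fun x : ℝ => x ^ (-c)) (-c * t ^ (-c - 1)) t :=
    fun t ht => hasDerivAt_rpow_const (Or.inl (ha.trans ht).ne')
  apply monotoneOn_of_deriv_nonneg (convex_Ici a)
  · exact hcont.mul fun t ht =>
      (continuousAt_rpow_const t (-c) (Or.inl (ha.trans_le ht).ne')).continuousWithinAt
  · rw [interior_Ici]
    exact fun t ht => ((hdiff t ht).mul (hpow t ht).differentiableAt).differentiableWithinAt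
  · rw [interior_Ici]
    intro t ht
    have ht0 : 0 < t := ha.trans ht
    have hderiv : HasDerivAt (fun x => φ x * x ^ (-c))
        (deriv φ t * t ^ (-c) + φ t * (-c * t ^ (-c - 1))) t :=
      (hdiff t ht).hasDerivAt.mul (hpow t ht)
    rw [hderiv.deriv]
    have hsplit : t ^ (-c) = t * t ^ (-c - 1) := by
      rw [rpow_sub_one ht0.ne']; field_simp
    rw [hsplit]
    nlinarith [mul_nonneg (sub_nonneg.2 (hle t ht)) (rpow_pos_of_pos ht0 (-c - 1)).le]

theorem mul_rpow_le_of_mul_le_mul_deriv (ha : 0 < a)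
    (hcont : ContinuousOn φ (Ici a)) (hdiff : ∀ t ∈ Ioi a, DifferentiableAt ℝ φ t)
    (hle : ∀ t ∈ Ioi a, c * φ t ≤ t * deriv φ t) {t : ℝ} (ht : a ≤ t) :
    φ a * (t / a) ^ c ≤ φ t := by
  have ht0 : 0 < t := ha.trans_le ht
  have hmono := monotoneOn_mul_rpow_neg_of_mul_le_mul_deriv ha hcont hdiff hle
    self_mem_Ici (show t ∈ Ici a from ht) ht
  have hpos : 0 < t ^ c := rpow_pos_of_pos ht0 c
  calc φ a * (t / a) ^ c = φ a * a ^ (-c) * t ^ c := by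
        rw [div_rpow ht0.le ha.le, rpow_neg ha.le]; ring
    _ ≤ φ t * t ^ (-c) * t ^ c := mul_le_mul_of_nonneg_right hmono hpos.le
    _ = φ t := by rw [rpow_neg ht0.le, mul_assoc, inv_mul_cancel₀ hpos.ne', mul_one]

theorem le_mul_rpow_of_mul_deriv_le_mul (ha : 0 < a)
    (hcont : ContinuousOn φ (Ici a)) (hdiff : ∀ t ∈ Ioi a, DifferentiableAt ℝ φ t)
    (hle : ∀ t ∈ Ioi a, t * deriv φ t ≤ c * φ t) {t : ℝ} (ht : a ≤ t) :
    φ t ≤ φ a * (t / a) ^ c := by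
  have := mul_rpow_le_of_mul_le_mul_deriv (φ := -φ) (c := c) ha hcont.neg
    (fun s hs => (hdiff s hs).neg) (fun s hs => by
      simp only [Pi.neg_apply, deriv.neg]; linarith [hle s hs]) ht
  simp only [Pi.neg_apply, neg_mul] at this
  linarith

theorem mul_rpow_le_of_le_mul_deriv_div (hcont : ContinuousOn φ (Ici 0))
    (hC1 : ContDiffOn ℝ 1 φ (Ioi 0)) (hpos : ∀ t, 0 < t → 0 < φ t)
    (hc : ∀ t, 0 < t → c ≤ t * deriv φ t / φ t) {t : ℝ} (ht : 1 ≤ t) :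
    φ 1 * t ^ c ≤ φ t := by
  simpa using mul_rpow_le_of_mul_le_mul_deriv one_pos
    (hcont.mono (Ici_subset_Ici.2 zero_le_one))
    (fun s hs => (hC1.contDiffAt (Ioi_mem_nhds (zero_lt_one.trans hs))).differentiableAt
      one_ne_zero)
    (fun s hs => (le_div_iff₀ (hpos s (zero_lt_one.trans hs))).1
      (hc s (zero_lt_one.trans hs))) ht

theorem le_mul_rpow_of_mul_deriv_div_le (hcont : ContinuousOn φ (Ici 0))
    (hC1 : ContDiffOn ℝ 1 φ (Ioi 0)) (hpos : ∀ t, 0 < t → 0 < φ t)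
    (hc : ∀ t, 0 < t → t * deriv φ t / φ t ≤ c) {t : ℝ} (ht : 1 ≤ t) :
    φ t ≤ φ 1 * t ^ c := by
  simpa using le_mul_rpow_of_mul_deriv_le_mul one_pos
    (hcont.mono (Ici_subset_Ici.2 zero_le_one))
    (fun s hs => (hC1.contDiffAt (Ioi_mem_nhds (zero_lt_one.trans hs))).differentiableAt
      one_ne_zero)
    (fun s hs => (div_le_iff₀ (hpos s (zero_lt_one.trans hs))).1
      (hc s (zero_lt_one.trans hs))) ht

end PowerComparison

theorem tendsto_div_of_le_rpow_of_rpow_le {u v : ℝ → ℝ} {p q A B : ℝ} (hpq : p < q)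
    (hB : 0 < B) (hu_nonneg : ∀ᶠ t in atTop, 0 ≤ u t) (hu : ∀ᶠ t in atTop, u t ≤ A * t ^ p)
    (hv : ∀ᶠ t in atTop, B * t ^ q ≤ v t) :
    Tendsto (fun t => u t / v t) atTop (𝓝 0) := by
  have hlim : Tendsto (fun t : ℝ => A / B * t ^ (-(q - p))) atTop (𝓝 0) := by
    simpa using (tendsto_rpow_neg_atTop (sub_pos.2 hpq)).const_mul (A / B)
  refine tendsto_of_tendsto_of_tendsto_of_le_of_le' tendsto_const_nhds hlim ?_ ?_
  all_goals
    filter_upwards [hu_nonneg, hu, hv, eventually_gt_atTop 0] with t hu0 hut hvt ht0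
    have hBt : 0 < B * t ^ q := mul_pos hB (rpow_pos_of_pos ht0 q)
  · exact div_nonneg hu0 (hBt.trans_le hvt).le
  · calc u t / v t ≤ A * t ^ p / (B * t ^ q) := div_le_div₀ (hu0.trans hut) hut hBt hvt
      _ = A / B * t ^ (-(q - p)) := by
        rw [neg_sub, rpow_sub ht0]
        field_simp

theorem eventually_mul_rpow_le_integral {g : ℝ → ℝ} {c δ : ℝ}
    (hcont : ContinuousOn g (Ici 0)) (hnonneg : ∀ t, 0 ≤ t → 0 ≤ g t) (hc : 0 ≤ c)
    (hδ : -1 < δ) (hlow : ∀ t, 1 ≤ t → c * t ^ δ ≤ g t) :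
    ∀ᶠ t in atTop, c / (2 * (δ + 1)) * t ^ (δ + 1) ≤ ∫ s in (0:ℝ)..t, g s := by
  have hδ1 : 0 < δ + 1 := by linarith
  filter_upwards [eventually_ge_atTop 1,
    (tendsto_rpow_atTop hδ1).eventually_ge_atTop 2] with t ht1 ht2
  have hint : ∀ a b, 0 ≤ a → a ≤ b → IntervalIntegrable g MeasureTheory.volume a b :=
    fun a b ha hab => (hcont.mono fun x hx => ha.trans hx.1).intervalIntegrable_of_Icc hab
  have hhead : 0 ≤ ∫ s in (0:ℝ)..1, g s :=
    intervalIntegral.integral_nonneg zero_le_one fun s hs => hnonneg s hs.1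
  have htail : c * ((t ^ (δ + 1) - 1) / (δ + 1)) ≤ ∫ s in (1:ℝ)..t, g s := by
    calc c * ((t ^ (δ + 1) - 1) / (δ + 1)) = ∫ s in (1:ℝ)..t, c * s ^ δ := by
          rw [intervalIntegral.integral_const_mul, integral_rpow (Or.inl hδ), one_rpow]
      _ ≤ ∫ s in (1:ℝ)..t, g s :=
          intervalIntegral.integral_mono_on ht1
            ((intervalIntegral.intervalIntegrable_rpow' hδ).const_mul c)
            (hint 1 t zero_le_one ht1) fun s hs => hlow s hs.1
  rw [← intervalIntegral.integral_add_adjacent_intervals (hint 0 1 le_rfl zero_le_one)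
    (hint 1 t zero_le_one ht1)]
  have : c / (2 * (δ + 1)) * t ^ (δ + 1) ≤ c * ((t ^ (δ + 1) - 1) / (δ + 1)) :=
    calc c / (2 * (δ + 1)) * t ^ (δ + 1) = c * (t ^ (δ + 1) / 2) / (δ + 1) := by field_simp
      _ ≤ c * (t ^ (δ + 1) - 1) / (δ + 1) := by gcongr; linarith
      _ = c * ((t ^ (δ + 1) - 1) / (δ + 1)) := mul_div_assoc _ _ _
  linarith

theorem stmt_8_general (g F f G : ℝ → ℝ) (δ₀ g₀ θ₀ f₀ : ℝ)
    (hθ : 0 < 1 + θ₀) (hθf : 1 + θ₀ ≤ 1 + f₀)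
    (hfδ : f₀ < δ₀)
    (hcontg : ContinuousOn g (Set.Ici 0))
    (hC1g : ContDiffOn ℝ 1 g (Set.Ioi 0))
    (hg0 : g 0 = 0)
    (hposg : ∀ t : ℝ, 0 < t → 0 < g t)
    (hliebg : ∀ t : ℝ, 0 < t → δ₀ ≤ t * deriv g t / g t ∧ t * deriv g t / g t ≤ g₀)
    (hcontF : ContinuousOn F (Set.Ici 0))
    (hC1F : ContDiffOn ℝ 1 F (Set.Ioi 0))
    (hposF : ∀ t : ℝ, 0 < t → 0 < F t)
    (hf : ∀ t : ℝ, 0 < t → f t = deriv F t)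
    (hliebF : ∀ t : ℝ, 0 < t →
      1 + θ₀ ≤ t * f t / F t ∧ t * f t / F t ≤ 1 + f₀)
    (hG : ∀ t : ℝ, G t = ∫ s in (0:ℝ)..t, g s) :
    Filter.Tendsto (fun t => f t / g t) Filter.atTop (nhds 0) ∧
    Filter.Tendsto (fun t => F t / G t) Filter.atTop (nhds 0) := by
  have hg1 : 0 < g 1 := hposg 1 one_pos
  have hg_low : ∀ t, 1 ≤ t → g 1 * t ^ δ₀ ≤ g t := fun t =>
    mul_rpow_le_of_le_mul_deriv_div hcontg hC1g hposg fun s hs => (hliebg s hs).1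
  have hF_up : ∀ t, 1 ≤ t → F t ≤ F 1 * t ^ (1 + f₀) := fun t =>
    le_mul_rpow_of_mul_deriv_div_le hcontF hC1F hposF fun s hs => hf s hs ▸ (hliebF s hs).2
  have hf_pos : ∀ t, 0 < t → 0 < f t := fun t ht =>
    pos_of_mul_pos_right ((div_pos_iff_of_pos_right (hposF t ht)).1
      (hθ.trans_le (hliebF t ht).1)) ht.le
  have hf_up : ∀ t, 1 ≤ t → f t ≤ (1 + f₀) * F 1 * t ^ f₀ := fun t ht => by
    have ht0 : 0 < t := zero_lt_one.trans_le ht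
    calc f t = t * f t / F t * F t / t := by field_simp [(hposF t ht0).ne']
      _ ≤ (1 + f₀) * (F 1 * t ^ (1 + f₀)) / t := by
        gcongr
        exacts [(hposF t ht0).le, (hθ.trans_le hθf).le, (hliebF t ht0).2, hF_up t ht]
      _ = (1 + f₀) * F 1 * t ^ f₀ := by
        rw [add_comm 1 f₀, rpow_add_one ht0.ne']
        field_simp
  have hG_low : ∀ᶠ t in atTop, g 1 / (2 * (δ₀ + 1)) * t ^ (δ₀ + 1) ≤ G t := by
    simpa only [hG] using eventually_mul_rpow_le_integral hcontg
      (fun t ht => ht.eq_or_lt.elim (fun h => h ▸ hg0.ge) fun h => (hposg t h).le)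
      hg1.le (by linarith) hg_low
  have hδ₀ : 0 < δ₀ + 1 := by linarith
  exact ⟨tendsto_div_of_le_rpow_of_rpow_le hfδ hg1
      (eventually_atTop.2 ⟨1, fun t ht => (hf_pos t (zero_lt_one.trans_le ht)).le⟩)
      (eventually_atTop.2 ⟨1, hf_up⟩) (eventually_atTop.2 ⟨1, hg_low⟩),
    tendsto_div_of_le_rpow_of_rpow_le (by linarith) (by positivity)
      (eventually_atTop.2 ⟨1, fun t ht => (hposF t (zero_lt_one.trans_le ht)).le⟩)
      (eventually_atTop.2 ⟨1, hF_up⟩) hG_low⟩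

theorem stmt_8 (g F f G : ℝ → ℝ) (δ₀ g₀ θ₀ f₀ : ℝ)
    (hδ : 0 < δ₀) (hδg : δ₀ ≤ g₀)
    (hθ : 0 < 1 + θ₀) (hθf : 1 + θ₀ ≤ 1 + f₀)
    (hfδ : f₀ < δ₀)
    (hcontg : ContinuousOn g (Set.Ici 0))
    (hC1g : ContDiffOn ℝ 1 g (Set.Ioi 0))
    (hg0 : g 0 = 0)
    (hposg : ∀ t : ℝ, 0 < t → 0 < g t)
    (hliebg : ∀ t : ℝ, 0 < t → δ₀ ≤ t * deriv g t / g t ∧ t * deriv g t / g t ≤ g₀)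
    (hcontF : ContinuousOn F (Set.Ici 0))
    (hC1F : ContDiffOn ℝ 1 F (Set.Ioi 0))
    (hF0 : F 0 = 0)
    (hposF : ∀ t : ℝ, 0 < t → 0 < F t)
    (hf : ∀ t : ℝ, 0 < t → f t = deriv F t)
    (hliebF : ∀ t : ℝ, 0 < t →
      1 + θ₀ ≤ t * f t / F t ∧ t * f t / F t ≤ 1 + f₀)
    (hG : ∀ t : ℝ, G t = ∫ s in (0:ℝ)..t, g s) :
    Filter.Tendsto (fun t => f t / g t) Filter.atTop (nhds 0) ∧
    Filter.Tendsto (fun t => F t / G t) Filter.atTop (nhds 0) :=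
  stmt_8_general g F f G δ₀ g₀ θ₀ f₀ hθ hθf hfδ hcontg hC1g hg0 hposg hliebg hcontF hC1F hposF hf
    hliebF hG
end

section
/- Under the Lieberman condition on g, with G(t) = ∫₀ᵗ g and G̃(t) = ∫₀ᵗ g⁻¹, one has G̃(g(t)) ≤ g₀·G(t) for all t ≥ 0. -/
/-!
With `φ s = c ∫₀ˢ g - ∫₀^{g s} g⁻¹`, the chain rule and `g⁻¹ (g s) = s` give
`φ' s = c g s - s g' s`, which is nonnegative exactly when `s g'(s) ≤ c g(s)`; this is the upper
half of the Lieberman condition with `c = g₀`. Hence `φ` is monotone and `φ t ≥ φ 0 = 0`.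
-/

open Set MeasureTheory

theorem StrictMonoOn.monotoneOn_of_leftInvOn {α β : Type*} [LinearOrder α] [Preorder β]
    {f : α → β} {f' : β → α} {s : Set α} {t : Set β} (hf : StrictMonoOn f s)
    (hf' : LeftInvOn f' f s) (hst : SurjOn f s t) : MonotoneOn f' t := by
  intro y₁ hy₁ y₂ hy₂ hy
  obtain ⟨x₁, hx₁, rfl⟩ := hst hy₁
  obtain ⟨x₂, hx₂, rfl⟩ := hst hy₂
  rw [hf' hx₁, hf' hx₂]
  by_contra! hlt
  exact (hf hx₂ hx₁ hlt).not_ge hy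

theorem hasDerivAt_integral_of_continuousOn {f : ℝ → ℝ} {U : Set ℝ} {a x : ℝ} (hU : IsOpen U)
    (hf : ContinuousOn f U) (hx : x ∈ U) (hint : IntervalIntegrable f volume a x) :
    HasDerivAt (fun y => ∫ u in a..y, f u) (f x) x :=
  intervalIntegral.integral_hasDerivAt_right hint (hf.stronglyMeasurableAtFilter hU x hx)
    (hf.continuousAt (hU.mem_nhds hx))

theorem continuousOn_integral_Icc {f : ℝ → ℝ} {a b : ℝ} (hab : a ≤ b)
    (hint : IntervalIntegrable f volume a b) :
    ContinuousOn (fun x => ∫ u in a..x, f u) (Icc a b) := by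
  simpa only [uIcc_of_le hab] using
    intervalIntegral.continuousOn_primitive_interval' hint left_mem_uIcc

section LeftInverse

variable {g ginv : ℝ → ℝ}

theorem continuousOn_Ioi_of_leftInvOn (hg0 : g 0 = 0) (hmono : StrictMonoOn g (Ici 0))
    (hinv : LeftInvOn ginv g (Ici 0)) (hsurj : SurjOn g (Ici 0) (Ici 0)) :
    ContinuousOn ginv (Ioi 0) := by
  intro y hy
  obtain ⟨x, hx, rfl⟩ := hsurj (mem_Ici.2 (le_of_lt hy))
  have hx_pos : 0 < x := lt_of_le_of_ne hx (by rintro rfl; exact hy.ne' hg0)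
  have hg_nonneg : MapsTo g (Ici 0) (Ici 0) := by
    simpa only [hg0] using hmono.monotoneOn.mapsTo_Ici
  have himage : Ici 0 ⊆ ginv '' Ici 0 := fun z hz => ⟨g z, hg_nonneg hz, hinv hz⟩
  refine (continuousAt_of_monotoneOn_of_image_mem_nhds
    (hmono.monotoneOn_of_leftInvOn hinv hsurj) (Ici_mem_nhds hy) ?_).continuousWithinAt
  rw [hinv hx]
  exact Filter.mem_of_superset (Ici_mem_nhds hx_pos) himage

theorem integral_leftInvOn_comp_le_mul_integral {c t : ℝ} (hcont : ContinuousOn g (Ici 0))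
    (hdiff : DifferentiableOn ℝ g (Ioi 0)) (hg0 : g 0 = 0) (hmono : StrictMonoOn g (Ici 0))
    (hinv : LeftInvOn ginv g (Ici 0)) (hsurj : SurjOn g (Ici 0) (Ici 0))
    (hle : ∀ s, 0 < s → s * deriv g s ≤ c * g s) (ht : 0 ≤ t) :
    ∫ u in (0:ℝ)..g t, ginv u ≤ c * ∫ s in (0:ℝ)..t, g s := by
  have hg_int : ∀ x, 0 ≤ x → IntervalIntegrable g volume 0 x := fun x hx =>
    (hcont.mono (by simpa only [uIcc_of_le hx] using Icc_subset_Ici_self)).intervalIntegrable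
  have hginv_int : ∀ y, 0 ≤ y → IntervalIntegrable ginv volume 0 y := fun y hy =>
    ((hmono.monotoneOn_of_leftInvOn hinv hsurj).mono
      (by simpa only [uIcc_of_le hy] using Icc_subset_Ici_self)).intervalIntegrable
  have hginv_cont := continuousOn_Ioi_of_leftInvOn hg0 hmono hinv hsurj
  have hg_nonneg : MapsTo g (Ici 0) (Ici 0) := by
    simpa only [hg0] using hmono.monotoneOn.mapsTo_Ici
  have hgt : 0 ≤ g t := hg_nonneg ht
  have hmaps : MapsTo g (Icc 0 t) (Icc 0 (g t)) := fun s hs =>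
    ⟨hg_nonneg hs.1, hmono.monotoneOn hs.1 ht hs.2⟩
  set φ : ℝ → ℝ := fun s => c * (∫ u in (0:ℝ)..s, g u) - ∫ u in (0:ℝ)..g s, ginv u
  have hφ_cont : ContinuousOn φ (Icc 0 t) :=
    (continuousOn_const.mul (continuousOn_integral_Icc ht (hg_int t ht))).sub
      ((continuousOn_integral_Icc hgt (hginv_int _ hgt)).comp
        (hcont.mono Icc_subset_Ici_self) hmaps)
  have hφ_deriv : ∀ s, 0 < s → HasDerivAt φ (c * g s - s * deriv g s) s := by
    intro s hs
    have hgs : 0 < g s := by simpa only [hg0] using hmono (mem_Ici.2 le_rfl) hs.le hs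
    have hG := hasDerivAt_integral_of_continuousOn isOpen_Ioi
      (hcont.mono Ioi_subset_Ici_self) hs (hg_int s hs.le)
    have hGinv := (hasDerivAt_integral_of_continuousOn isOpen_Ioi hginv_cont hgs
      (hginv_int _ hgs.le)).comp s (hdiff.differentiableAt (Ioi_mem_nhds hs)).hasDerivAt
    rw [hinv (mem_Ici.2 hs.le)] at hGinv
    exact (hG.const_mul c).sub hGinv
  have hφ_mono : MonotoneOn φ (Icc 0 t) := by
    refine monotoneOn_of_deriv_nonneg (convex_Icc 0 t) hφ_cont ?_ ?_ <;> rw [interior_Icc]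
    · exact fun s hs => (hφ_deriv s hs.1).differentiableAt.differentiableWithinAt
    · intro s hs
      rw [(hφ_deriv s hs.1).deriv, sub_nonneg]
      exact hle s hs.1
  simpa [φ, hg0, sub_nonneg] using hφ_mono (left_mem_Icc.2 ht) (right_mem_Icc.2 ht) ht

end LeftInverse

theorem stmt_14_general (g ginv G Gt : ℝ → ℝ) (δ₀ g₀ : ℝ)
    (hcont : ContinuousOn g (Set.Ici 0))
    (hC1 : ContDiffOn ℝ 1 g (Set.Ioi 0))
    (hg0 : g 0 = 0)
    (hpos : ∀ t : ℝ, 0 < t → 0 < g t)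
    (hstrict : StrictMonoOn g (Set.Ici 0))
    (hsurj : ∀ y : ℝ, 0 ≤ y → ∃ x : ℝ, 0 ≤ x ∧ g x = y)
    (hlieb : ∀ t : ℝ, 0 < t → δ₀ ≤ t * deriv g t / g t ∧ t * deriv g t / g t ≤ g₀)
    (hinv₁ : ∀ t : ℝ, 0 ≤ t → ginv (g t) = t)
    (hG : ∀ t : ℝ, G t = ∫ s in (0:ℝ)..t, g s)
    (hGt : ∀ t : ℝ, Gt t = ∫ s in (0:ℝ)..t, ginv s) :
    ∀ t : ℝ, 0 ≤ t → Gt (g t) ≤ g₀ * G t := by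
  intro t ht
  have hderiv_le : ∀ s, 0 < s → s * deriv g s ≤ g₀ * g s := fun s hs =>
    (div_le_iff₀ (hpos s hs)).1 (hlieb s hs).2
  rw [hGt, hG]
  exact integral_leftInvOn_comp_le_mul_integral hcont (hC1.differentiableOn one_ne_zero) hg0
    hstrict (fun x hx => hinv₁ x hx) (fun y hy => hsurj y hy) hderiv_le ht

theorem stmt_14 (g ginv G Gt : ℝ → ℝ) (δ₀ g₀ : ℝ)
    (hδ : 0 < δ₀) (hδg : δ₀ ≤ g₀)
    (hcont : ContinuousOn g (Set.Ici 0))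
    (hC1 : ContDiffOn ℝ 1 g (Set.Ioi 0))
    (hg0 : g 0 = 0)
    (hpos : ∀ t : ℝ, 0 < t → 0 < g t)
    (hstrict : StrictMonoOn g (Set.Ici 0))
    (hsurj : ∀ y : ℝ, 0 ≤ y → ∃ x : ℝ, 0 ≤ x ∧ g x = y)
    (hlieb : ∀ t : ℝ, 0 < t → δ₀ ≤ t * deriv g t / g t ∧ t * deriv g t / g t ≤ g₀)
    (hinv₁ : ∀ t : ℝ, 0 ≤ t → ginv (g t) = t)
    (hinv₂ : ∀ t : ℝ, 0 ≤ t → g (ginv t) = t)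
    (hG : ∀ t : ℝ, G t = ∫ s in (0:ℝ)..t, g s)
    (hGt : ∀ t : ℝ, Gt t = ∫ s in (0:ℝ)..t, ginv s) :
    ∀ t : ℝ, 0 ≤ t → Gt (g t) ≤ g₀ * G t :=
  stmt_14_general g ginv G Gt δ₀ g₀ hcont hC1 hg0 hpos hstrict hsurj hlieb hinv₁ hG hGt
end

section
/- The function g(t) = (1+t)·ln(1+t) − t satisfies the Lieberman condition 1 ≤ t·g'(t)/g(t) ≤ 2 for all t > 0. -/
/-!
Since `g' (t) = log (1 + t)`, after clearing the denominator `g t` the two inequalities become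
`log (1 + t) ≤ t` and `2 t ≤ (2 + t) log (1 + t)`, i.e. the classical bounds
`2 t / (2 + t) < log (1 + t) ≤ t`; the strict lower bound also gives `g t > 0`.
-/

open Real

lemma hasDerivAt_one_add_mul_log_one_add_sub {t : ℝ} (ht : 1 + t ≠ 0) :
    HasDerivAt (fun s => (1 + s) * log (1 + s) - s) (log (1 + t)) t :=
  (((hasDerivAt_mul_log ht).comp_const_add 1 t).sub (hasDerivAt_id' t)).congr_deriv (by ring)

lemma two_mul_lt_two_add_mul_log_one_add {t : ℝ} (ht : 0 < t) :
    2 * t < (2 + t) * log (1 + t) := by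
  have h := lt_log_one_add_of_pos ht
  rw [div_lt_iff₀ (by positivity)] at h
  linarith

theorem stmt_17 (g : ℝ → ℝ)
    (hg : ∀ t : ℝ, g t = (1 + t) * Real.log (1 + t) - t) :
    ∀ t : ℝ, 0 < t →
      1 ≤ t * deriv g t / g t ∧ t * deriv g t / g t ≤ 2 := by
  intro t ht
  have hderiv : deriv g t = log (1 + t) := by
    rw [funext hg]
    exact (hasDerivAt_one_add_mul_log_one_add_sub (by positivity)).deriv
  have hlog_le : log (1 + t) ≤ t := by
    linarith [log_le_sub_one_of_pos (by positivity : (0 : ℝ) < 1 + t)]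
  have hlog_gt := two_mul_lt_two_add_mul_log_one_add ht
  have hg_pos : 0 < g t := by rw [hg]; linarith
  rw [le_div_iff₀ hg_pos, div_le_iff₀ hg_pos, hderiv, hg]
  constructor <;> linarith
end

section
/- For constants a, b > 0, the function g(t) = ln(1+a·t) + b·t satisfies b/(a+b) ≤ t·g'(t)/g(t) ≤ (a+b)/b for all t > 0. -/
/-!
With `u = a t`, the elementary bounds `u / (1 + u) ≤ log (1 + u) ≤ u` give
`t g'(t) = u / (1 + u) + b t ∈ [b t, g(t)]` and `g(t) ∈ [b t, (a + b) t]`.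
Hence the ratio `t g'(t) / g(t)` lies between `b t / ((a + b) t)` and `1 ≤ (a + b) / b`.
-/

open Real

lemma div_one_add_le_log_one_add {x : ℝ} (hx : -1 < x) : x / (1 + x) ≤ log (1 + x) := by
  have hpos : 0 < 1 + x := by linarith
  calc x / (1 + x) = 1 - (1 + x)⁻¹ := by field_simp; ring
    _ ≤ log (1 + x) := one_sub_inv_le_log_of_pos hpos

lemma log_one_add_le_self {x : ℝ} (hx : -1 < x) : log (1 + x) ≤ x := by
  linarith [log_le_sub_one_of_pos (show 0 < 1 + x by linarith)]

lemma hasDerivAt_log_one_add_mul_add_mul {a b t : ℝ} (h : 1 + a * t ≠ 0) :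
    HasDerivAt (fun s => log (1 + a * s) + b * s) (a / (1 + a * t) + b) t := by
  have hlin : HasDerivAt (fun s => 1 + a * s) a t := by
    simpa using ((hasDerivAt_id t).const_mul a).const_add 1
  exact (hlin.log h).add (by simpa using (hasDerivAt_id t).const_mul b)

lemma elasticity_log_one_add_mul_add_mul_mem_Icc {a b t : ℝ} (ha : 0 < a) (hb : 0 < b)
    (ht : 0 < t) :
    (a * t / (1 + a * t) + b * t) / (log (1 + a * t) + b * t) ∈ Set.Icc (b / (a + b)) 1 := by
  have hu : 0 < a * t := mul_pos ha ht
  have hbt : 0 < b * t := mul_pos hb ht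
  have hlow := div_one_add_le_log_one_add (x := a * t) (by linarith)
  have hhigh := log_one_add_le_self (x := a * t) (by linarith)
  have hfrac : 0 ≤ a * t / (1 + a * t) := by positivity
  have hg : 0 < log (1 + a * t) + b * t := by linarith
  constructor
  · calc b / (a + b) = b * t / (a * t + b * t) := by field_simp
      _ ≤ b * t / (log (1 + a * t) + b * t) :=
        div_le_div_of_nonneg_left hbt.le hg (by linarith)
      _ ≤ (a * t / (1 + a * t) + b * t) / (log (1 + a * t) + b * t) :=
        div_le_div_of_nonneg_right (by linarith) hg.le
  · exact (div_le_one hg).2 (by linarith)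

theorem stmt_18 (a b : ℝ) (ha : 0 < a) (hb : 0 < b) (g : ℝ → ℝ)
    (hg : ∀ t : ℝ, g t = Real.log (1 + a * t) + b * t) :
    ∀ t : ℝ, 0 < t →
      b / (a + b) ≤ t * deriv g t / g t ∧ t * deriv g t / g t ≤ (a + b) / b := by
  intro t ht
  have hderiv : deriv g t = a / (1 + a * t) + b := by
    rw [show g = _ from funext hg]
    exact (hasDerivAt_log_one_add_mul_add_mul (by positivity)).deriv
  have hnum : t * deriv g t = a * t / (1 + a * t) + b * t := by
    rw [hderiv, mul_add, mul_div_assoc', mul_comm t a, mul_comm t b]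
  rw [hnum, hg t]
  obtain ⟨hlower, hle_one⟩ := elasticity_log_one_add_mul_add_mul_mem_Icc ha hb ht
  exact ⟨hlower, hle_one.trans ((one_le_div hb).2 (by linarith))⟩
end
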